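/- Let u ∈ ℝ^n with u > 0 entrywise and ‖u‖ = 1, set λ = λ(u), and let (Δ, δ) solve the Newton system at (u,λ) with r(u,λ) ≠ 0 (so that δ > 0). Let η > 0, and let M > 0 be such that for every θ ∈ (0,1], with w(θ) = u + θΔ and u'(θ) = w(θ)/‖w(θ)‖, one has ‖ r(u'(θ),λ) − ((1−θ)/‖w(θ)‖)·r(u,λ) − (θδ/‖w(θ)‖)·u ‖ ≤ M·θ²·‖Δ‖². If θ ∈ (0,1] satisfies θ·M·‖Δ‖²·(1+η)·‖w(θ)‖ ≤ η·δ·min(u), then r(u'(θ), λ) ≥ (θδ/((1+η)‖w(θ)‖))·u > 0 entrywise, and consequently λ(u'(θ)) > λ(u). -/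

import Mathlib

open Matrix Finset

noncomputable def eucNorm {n : ℕ} (u : Fin n → ℝ) : ℝ := Real.sqrt (∑ i, u i ^ 2)

def IsZMatrix {n : ℕ} (B : Matrix (Fin n) (Fin n) ℝ) : Prop :=
  ∀ i j, i ≠ j → B i j ≤ 0

def IsIrreducibleMat {n : ℕ} (B : Matrix (Fin n) (Fin n) ℝ) : Prop :=
  ¬ ∃ S : Finset (Fin n), S.Nonempty ∧ S ≠ Finset.univ ∧
    ∀ i ∈ S, ∀ j ∉ S, B i j = 0

def IsNonsingularM {n : ℕ} (B : Matrix (Fin n) (Fin n) ℝ) : Prop :=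
  IsZMatrix B ∧ IsUnit B ∧ ∀ i j, 0 ≤ B⁻¹ i j

noncomputable def calA {n : ℕ} (A : Matrix (Fin n) (Fin n) ℝ) (Γ : ℝ) (a : Fin n → ℝ)
    (u : Fin n → ℝ) : Matrix (Fin n) (Fin n) ℝ :=
  A + Γ • Matrix.diagonal (fun i => 1 - 1 / (a i + u i ^ 2))

noncomputable def rvec {n : ℕ} (A : Matrix (Fin n) (Fin n) ℝ) (Γ : ℝ) (a : Fin n → ℝ)
    (u : Fin n → ℝ) (lam : ℝ) : Fin n → ℝ :=
  calA A Γ a u *ᵥ u - lam • u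

noncomputable def Jmat {n : ℕ} (A : Matrix (Fin n) (Fin n) ℝ) (Γ : ℝ) (a : Fin n → ℝ)
    (u : Fin n → ℝ) (lam : ℝ) : Matrix (Fin n) (Fin n) ℝ :=
  A + (Γ - lam) • (1 : Matrix (Fin n) (Fin n) ℝ)
    - Γ • Matrix.diagonal (fun i => (a i - u i ^ 2) / (a i + u i ^ 2) ^ 2)

noncomputable def lamOf {n : ℕ} [NeZero n] (A : Matrix (Fin n) (Fin n) ℝ) (Γ : ℝ)
    (a : Fin n → ℝ) (u : Fin n → ℝ) : ℝ :=
  ⨅ i, (calA A Γ a u *ᵥ u) i / u i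

def NewtonSystem {n : ℕ} (A : Matrix (Fin n) (Fin n) ℝ) (Γ : ℝ) (a : Fin n → ℝ)
    (u : Fin n → ℝ) (lam : ℝ) (Δ : Fin n → ℝ) (δ : ℝ) : Prop :=
  Jmat A Γ a u lam *ᵥ Δ - δ • u = -rvec A Γ a u lam ∧
  -(u ⬝ᵥ Δ) = -(1/2 * (u ⬝ᵥ u - 1))

noncomputable def wvec {n : ℕ} (u Δ : Fin n → ℝ) (θ : ℝ) : Fin n → ℝ := u + θ • Δ

noncomputable def unext {n : ℕ} (u Δ : Fin n → ℝ) (θ : ℝ) : Fin n → ℝ :=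
  (eucNorm (wvec u Δ θ))⁻¹ • wvec u Δ θ

/-!
If `Δ = 0`, the Newton system says `r(u,λ) = δ u`; since `r(u,λ) ≥ 0` vanishes at an index where
the ratio defining `λ(u)` is minimal, this forces `r(u,λ) = 0`. Hence `Δ ≠ 0` and the step-size
condition forces `δ > 0`.

Because `u ⟂ Δ`, `‖w(t)‖² = 1 + t²‖Δ‖²`, so `t ↦ t‖w(t)‖` is increasing and the step-size
condition at `θ` holds at every `t ∈ (0, θ]`. There it absorbs the remainder `M t²‖Δ‖²`, and
together with `r(u,λ) ≥ 0` gives `r(u'(t),λ) ≥ tδ u / ((1+η)‖w(t)‖) > 0`.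

If `w(θ)` were not positive, the segment `u + tΔ` would reach the boundary of the positive
orthant at some first `t ≤ θ`: then `u'(t) ≥ 0` with `u'(t)_i = 0` for some `i`, and
`(𝒜(u'(t)) u'(t))_i ≤ 0` since the off-diagonal entries of `A` are nonpositive, contradicting
`r(u'(t),λ)_i > 0`. Finally `r(u'(θ),λ) > 0` says every ratio `(𝒜 u')_i / u'_i` exceeds `λ`.
-/

section EuclideanNorm

variable {n : ℕ}

lemma eucNorm_eq_norm (x : Fin n → ℝ) :
    eucNorm x = ‖(WithLp.toLp 2 x : EuclideanSpace ℝ (Fin n))‖ := by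
  simp [eucNorm, EuclideanSpace.norm_eq]

lemma eucNorm_nonneg (x : Fin n → ℝ) : 0 ≤ eucNorm x := Real.sqrt_nonneg _

lemma eucNorm_pos {x : Fin n → ℝ} (hx : x ≠ 0) : 0 < eucNorm x := by
  rw [eucNorm_eq_norm, norm_pos_iff]
  simpa using hx

lemma abs_apply_le_eucNorm (x : Fin n → ℝ) (i : Fin n) : |x i| ≤ eucNorm x := by
  simpa [eucNorm_eq_norm] using PiLp.norm_apply_le (WithLp.toLp 2 x : EuclideanSpace ℝ (Fin n)) i

lemma eucNorm_sq (x : Fin n → ℝ) : eucNorm x ^ 2 = x ⬝ᵥ x := by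
  rw [eucNorm, Real.sq_sqrt (sum_nonneg fun i _ => sq_nonneg (x i))]
  simp [dotProduct, sq]

end EuclideanNorm

section Segment

variable {n : ℕ} {u Δ : Fin n → ℝ}

lemma unext_apply (u Δ : Fin n → ℝ) (t : ℝ) (i : Fin n) :
    unext u Δ t i = (eucNorm (wvec u Δ t))⁻¹ * (u i + t * Δ i) := rfl

lemma eucNorm_wvec_sq (h : u ⬝ᵥ Δ = 0) (t : ℝ) :
    eucNorm (wvec u Δ t) ^ 2 = eucNorm u ^ 2 + t ^ 2 * eucNorm Δ ^ 2 := by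
  simp only [wvec, eucNorm_sq, add_dotProduct, dotProduct_add, smul_dotProduct, dotProduct_smul,
    h, dotProduct_comm Δ u, smul_eq_mul]
  ring

lemma eucNorm_le_eucNorm_wvec (h : u ⬝ᵥ Δ = 0) (t : ℝ) : eucNorm u ≤ eucNorm (wvec u Δ t) := by
  refine (pow_le_pow_iff_left₀ (eucNorm_nonneg _) (eucNorm_nonneg _) two_ne_zero).1 ?_
  rw [eucNorm_wvec_sq h]
  exact le_add_of_nonneg_right (by positivity)

lemma mul_eucNorm_wvec_le (h : u ⬝ᵥ Δ = 0) {s t : ℝ} (hs : 0 ≤ s) (hst : s ≤ t) :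
    s * eucNorm (wvec u Δ s) ≤ t * eucNorm (wvec u Δ t) := by
  have hnorm : eucNorm (wvec u Δ s) ≤ eucNorm (wvec u Δ t) := by
    refine (pow_le_pow_iff_left₀ (eucNorm_nonneg _) (eucNorm_nonneg _) two_ne_zero).1 ?_
    rw [eucNorm_wvec_sq h, eucNorm_wvec_sq h]
    gcongr
  exact mul_le_mul hst hnorm (eucNorm_nonneg _) (hs.trans hst)

lemma exists_mem_Ioc_nonneg_apply_eq_zero (hu : ∀ i, 0 < u i) {θ : ℝ} (hθ : 0 ≤ θ)
    (hexit : ¬ ∀ i, 0 < u i + θ * Δ i) :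
    ∃ t ∈ Set.Ioc 0 θ, ∃ i₀, (∀ i, 0 ≤ u i + t * Δ i) ∧ u i₀ + t * Δ i₀ = 0 := by
  obtain ⟨i, hi⟩ : ∃ i, u i + θ * Δ i ≤ 0 := by simpa using hexit
  have hΔi : Δ i < 0 := by nlinarith [hu i]
  set S := univ.filter fun j => Δ j < 0
  have hS : S.Nonempty := ⟨i, by simpa [S] using hΔi⟩
  obtain ⟨i₀, hi₀, ht⟩ := S.exists_mem_eq_inf' hS fun j => u j / -Δ j
  -- the first exit time is the smallest of the times `u j / (-Δ j)` at which a coordinate vanishes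
  set t := S.inf' hS fun j => u j / -Δ j
  have ht_le : ∀ j, Δ j < 0 → t ≤ u j / -Δ j := fun j hj => inf'_le _ (by simpa [S] using hj)
  have hΔi₀ : Δ i₀ < 0 := by simpa [S] using hi₀
  have ht_pos : 0 < t := ht ▸ div_pos (hu i₀) (neg_pos.2 hΔi₀)
  refine ⟨t, ⟨ht_pos, ?_⟩, i₀, fun j => ?_, ?_⟩
  · exact (ht_le i hΔi).trans ((div_le_iff₀ (neg_pos.2 hΔi)).2 (by linarith))
  · rcases le_or_gt 0 (Δ j) with hj | hj
    · nlinarith [hu j]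
    · have := (le_div_iff₀ (neg_pos.2 hj)).1 (ht_le j hj)
      linarith
  · rw [ht, div_neg, neg_mul, div_mul_cancel₀ _ hΔi₀.ne, add_neg_cancel]

end Segment

section Residual

variable {n : ℕ} {A : Matrix (Fin n) (Fin n) ℝ} {Γ : ℝ} {a : Fin n → ℝ}

lemma rvec_apply (A : Matrix (Fin n) (Fin n) ℝ) (Γ : ℝ) (a u : Fin n → ℝ) (lam : ℝ) (i : Fin n) :
    rvec A Γ a u lam i = (calA A Γ a u *ᵥ u) i - lam * u i := rfl

lemma calA_mulVec_nonpos_of_apply_eq_zero (hA : IsZMatrix A) {v : Fin n → ℝ}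
    (hv : ∀ j, 0 ≤ v j) {i : Fin n} (hvi : v i = 0) : (calA A Γ a v *ᵥ v) i ≤ 0 := by
  rw [mulVec, dotProduct]
  refine sum_nonpos fun j _ => ?_
  by_cases hji : j = i
  · simp [hji, hvi]
  · have hoff : calA A Γ a v i j = A i j := by
      simp [calA, diagonal_apply_ne _ (Ne.symm hji)]
    rw [hoff]
    exact mul_nonpos_of_nonpos_of_nonneg (hA i j (Ne.symm hji)) (hv j)

lemma add_mul_pos_of_rvec_unext_pos (hA : IsZMatrix A) {u Δ : Fin n → ℝ} (hu : ∀ i, 0 < u i)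
    {lam θ : ℝ} (hθ : 0 ≤ θ) (hres : ∀ t ∈ Set.Ioc 0 θ, ∀ i, 0 < rvec A Γ a (unext u Δ t) lam i)
    (i : Fin n) : 0 < u i + θ * Δ i := by
  revert i
  by_contra hexit
  obtain ⟨t, ht, i₀, hnonneg, hzero⟩ := exists_mem_Ioc_nonneg_apply_eq_zero hu hθ hexit
  have hv_zero : unext u Δ t i₀ = 0 := by rw [unext_apply, hzero, mul_zero]
  have hv_nonneg (j : Fin n) : 0 ≤ unext u Δ t j := by
    rw [unext_apply]
    exact mul_nonneg (inv_nonneg.2 (eucNorm_nonneg _)) (hnonneg j)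
  refine (hres t ht i₀).not_ge ?_
  rw [rvec_apply, hv_zero, mul_zero, sub_zero]
  exact calA_mulVec_nonpos_of_apply_eq_zero hA hv_nonneg hv_zero

variable [NeZero n] {u : Fin n → ℝ}

lemma rvec_lamOf_nonneg (hu : ∀ i, 0 < u i) (i : Fin n) : 0 ≤ rvec A Γ a u (lamOf A Γ a u) i := by
  have hle : lamOf A Γ a u ≤ (calA A Γ a u *ᵥ u) i / u i :=
    ciInf_le (Set.finite_range _).bddBelow i
  rw [rvec_apply, sub_nonneg]
  exact (le_div_iff₀ (hu i)).1 hle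

lemma exists_rvec_lamOf_eq_zero (hu : ∀ i, 0 < u i) : ∃ k, rvec A Γ a u (lamOf A Γ a u) k = 0 := by
  obtain ⟨k, hk⟩ := exists_eq_ciInf_of_finite (f := fun i => (calA A Γ a u *ᵥ u) i / u i)
  exact ⟨k, by rw [rvec_apply, lamOf, ← hk, div_mul_cancel₀ _ (hu k).ne', sub_self]⟩

lemma lt_lamOf_of_rvec_pos (hu : ∀ i, 0 < u i) {lam : ℝ} (hr : ∀ i, 0 < rvec A Γ a u lam i) :
    lam < lamOf A Γ a u := by
  obtain ⟨k, hk⟩ := exists_eq_ciInf_of_finite (f := fun i => (calA A Γ a u *ᵥ u) i / u i)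
  rw [lamOf, ← hk, lt_div_iff₀ (hu k)]
  linarith [rvec_apply A Γ a u lam k ▸ hr k]

end Residual

section Newton

variable {n : ℕ} {A : Matrix (Fin n) (Fin n) ℝ} {Γ : ℝ} {a u Δ : Fin n → ℝ} {δ : ℝ}

lemma NewtonSystem.dotProduct_eq_zero {lam : ℝ} (h : NewtonSystem A Γ a u lam Δ δ)
    (hu : u ⬝ᵥ u = 1) : u ⬝ᵥ Δ = 0 := by
  have := h.2
  rw [hu] at this
  linarith

lemma NewtonSystem.ne_zero_of_rvec_ne_zero [NeZero n] (h : NewtonSystem A Γ a u (lamOf A Γ a u) Δ δ)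
    (hu : ∀ i, 0 < u i) (hr : rvec A Γ a u (lamOf A Γ a u) ≠ 0) : Δ ≠ 0 := by
  rintro rfl
  have hr_eq : rvec A Γ a u (lamOf A Γ a u) = δ • u := by
    have := h.1
    rw [mulVec_zero, zero_sub, neg_inj] at this
    exact this.symm
  obtain ⟨k, hk⟩ := exists_rvec_lamOf_eq_zero hu
  have hδ : δ = 0 := by
    have := congrFun hr_eq k
    rw [hk, Pi.smul_apply, smul_eq_mul] at this
    exact (mul_eq_zero.1 this.symm).resolve_right (hu k).ne'
  exact hr (by rw [hr_eq, hδ, zero_smul])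

end Newton

lemma le_apply_of_eucNorm_sub_le {n : ℕ} {r₀ r₁ x : Fin n → ℝ} {t δ η M D N : ℝ}
    (hN : 0 < N) (ht₀ : 0 ≤ t) (ht₁ : t ≤ 1) (hη : 0 ≤ η) (hr₀ : ∀ i, 0 ≤ r₀ i)
    (herr : eucNorm (r₁ - ((1 - t) / N) • r₀ - (t * δ / N) • x) ≤ M * t ^ 2 * D)
    (hsmall : ∀ i, t * M * D * (1 + η) * N ≤ η * δ * x i) (i : Fin n) :
    t * δ / ((1 + η) * N) * x i ≤ r₁ i := by
  have herr_i : -(M * t ^ 2 * D) ≤ r₁ i - (1 - t) / N * r₀ i - t * δ / N * x i :=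
    (abs_le.1 ((abs_apply_le_eucNorm _ i).trans herr)).1
  have hdamped : 0 ≤ (1 - t) / N * r₀ i := mul_nonneg (div_nonneg (by linarith) hN.le) (hr₀ i)
  have hgap : t * δ / N * x i - t * δ / ((1 + η) * N) * x i =
      t * (η * δ * x i) / ((1 + η) * N) := by
    field_simp
    ring
  have hremainder : M * t ^ 2 * D ≤ t * (η * δ * x i) / ((1 + η) * N) := by
    rw [le_div_iff₀ (by positivity)]
    nlinarith [mul_le_mul_of_nonneg_left (hsmall i) ht₀]
  linarith

theorem stmt_11_general {n : ℕ} [NeZero n] (A : Matrix (Fin n) (Fin n) ℝ) (a : Fin n → ℝ) (Γ : ℝ)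
    (hA : IsNonsingularM A)
    (u : Fin n → ℝ) (hu : ∀ i, 0 < u i) (hnorm : eucNorm u = 1)
    (Δ : Fin n → ℝ) (δ : ℝ)
    (hN : NewtonSystem A Γ a u (lamOf A Γ a u) Δ δ)
    (hr : rvec A Γ a u (lamOf A Γ a u) ≠ 0)
    (η : ℝ) (hη : 0 < η) (M : ℝ) (hM : 0 < M)
    (hbound : ∀ θ : ℝ, 0 < θ → θ ≤ 1 →
      eucNorm (rvec A Γ a (unext u Δ θ) (lamOf A Γ a u)
          - ((1 - θ) / eucNorm (wvec u Δ θ)) • rvec A Γ a u (lamOf A Γ a u)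
          - (θ * δ / eucNorm (wvec u Δ θ)) • u) ≤ M * θ ^ 2 * eucNorm Δ ^ 2)
    (θ : ℝ) (hθ0 : 0 < θ) (hθ1 : θ ≤ 1)
    (hcond : θ * M * eucNorm Δ ^ 2 * (1 + η) * eucNorm (wvec u Δ θ) ≤ η * δ * ⨅ i, u i) :
    (∀ i, θ * δ / ((1 + η) * eucNorm (wvec u Δ θ)) * u i ≤
        rvec A Γ a (unext u Δ θ) (lamOf A Γ a u) i) ∧
    (∀ i, 0 < rvec A Γ a (unext u Δ θ) (lamOf A Γ a u) i) ∧
    lamOf A Γ a u < lamOf A Γ a (unext u Δ θ) := by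
  have huΔ : u ⬝ᵥ Δ = 0 := hN.dotProduct_eq_zero (by rw [← eucNorm_sq, hnorm, one_pow])
  have hw_pos (t : ℝ) : 0 < eucNorm (wvec u Δ t) :=
    one_pos.trans_le (hnorm ▸ eucNorm_le_eucNorm_wvec huΔ t)
  have hδ : 0 < δ := by
    have hΔ := eucNorm_pos (hN.ne_zero_of_rvec_ne_zero hu hr)
    have hw := hw_pos θ
    have hpos : 0 < η * δ * ⨅ i, u i := lt_of_lt_of_le (by positivity) hcond
    exact pos_of_mul_pos_right (pos_of_mul_pos_left hpos (le_ciInf fun i => (hu i).le)) hη.le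
  have hsmall (t : ℝ) (ht₀ : 0 ≤ t) (htθ : t ≤ θ) (i : Fin n) :
      t * M * eucNorm Δ ^ 2 * (1 + η) * eucNorm (wvec u Δ t) ≤ η * δ * u i := calc
    _ = M * eucNorm Δ ^ 2 * (1 + η) * (t * eucNorm (wvec u Δ t)) := by ring
    _ ≤ M * eucNorm Δ ^ 2 * (1 + η) * (θ * eucNorm (wvec u Δ θ)) :=
      mul_le_mul_of_nonneg_left (mul_eucNorm_wvec_le huΔ ht₀ htθ) (by positivity)
    _ ≤ η * δ * ⨅ i, u i := by linarith
    _ ≤ η * δ * u i := by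
      gcongr
      exact ciInf_le (Set.finite_range u).bddBelow i
  have hlower (t : ℝ) (ht₀ : 0 < t) (htθ : t ≤ θ) (i : Fin n) :
      t * δ / ((1 + η) * eucNorm (wvec u Δ t)) * u i ≤ rvec A Γ a (unext u Δ t) (lamOf A Γ a u) i :=
    le_apply_of_eucNorm_sub_le (hw_pos t) ht₀.le (htθ.trans hθ1) hη.le (rvec_lamOf_nonneg hu)
      (hbound t ht₀ (htθ.trans hθ1)) (hsmall t ht₀.le htθ) i
  have hres_pos : ∀ t ∈ Set.Ioc 0 θ, ∀ i, 0 < rvec A Γ a (unext u Δ t) (lamOf A Γ a u) i := by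
    rintro t ⟨ht₀, htθ⟩ i
    have hw := hw_pos t
    have hcoeff : 0 < t * δ / ((1 + η) * eucNorm (wvec u Δ t)) := by positivity
    exact (mul_pos hcoeff (hu i)).trans_le (hlower t ht₀ htθ i)
  have hθ_mem : θ ∈ Set.Ioc 0 θ := ⟨hθ0, le_rfl⟩
  have hv_pos (i : Fin n) : 0 < unext u Δ θ i := by
    rw [unext_apply]
    exact mul_pos (inv_pos.2 (hw_pos θ)) (add_mul_pos_of_rvec_unext_pos hA.1 hu hθ0.le hres_pos i)
  exact ⟨hlower θ hθ0 le_rfl, hres_pos θ hθ_mem, lt_lamOf_of_rvec_pos hv_pos (hres_pos θ hθ_mem)⟩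

theorem stmt_11 {n : ℕ} [NeZero n] (A : Matrix (Fin n) (Fin n) ℝ) (a : Fin n → ℝ) (Γ : ℝ)
    (ha : ∀ i, 0 < a i) (hΓ : 0 < Γ)
    (hA : IsNonsingularM A) (hAirr : IsIrreducibleMat A)
    (u : Fin n → ℝ) (hu : ∀ i, 0 < u i) (hnorm : eucNorm u = 1)
    (Δ : Fin n → ℝ) (δ : ℝ)
    (hN : NewtonSystem A Γ a u (lamOf A Γ a u) Δ δ)
    (hr : rvec A Γ a u (lamOf A Γ a u) ≠ 0)
    (η : ℝ) (hη : 0 < η) (M : ℝ) (hM : 0 < M)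
    (hbound : ∀ θ : ℝ, 0 < θ → θ ≤ 1 →
      eucNorm (rvec A Γ a (unext u Δ θ) (lamOf A Γ a u)
          - ((1 - θ) / eucNorm (wvec u Δ θ)) • rvec A Γ a u (lamOf A Γ a u)
          - (θ * δ / eucNorm (wvec u Δ θ)) • u) ≤ M * θ ^ 2 * eucNorm Δ ^ 2)
    (θ : ℝ) (hθ0 : 0 < θ) (hθ1 : θ ≤ 1)
    (hcond : θ * M * eucNorm Δ ^ 2 * (1 + η) * eucNorm (wvec u Δ θ) ≤ η * δ * ⨅ i, u i) :
    (∀ i, θ * δ / ((1 + η) * eucNorm (wvec u Δ θ)) * u i ≤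
        rvec A Γ a (unext u Δ θ) (lamOf A Γ a u) i) ∧
    (∀ i, 0 < rvec A Γ a (unext u Δ θ) (lamOf A Γ a u) i) ∧
    lamOf A Γ a u < lamOf A Γ a (unext u Δ θ) :=
  stmt_11_general A a Γ hA u hu hnorm Δ δ hN hr η hη M hM hbound θ hθ0 hθ1 hcond
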